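/- Let π, ω ∈ S_n with π ≤ ω in the weak order, and let P be the unique acyclic pipe dream of Π(ω) having π as a linear extension. Then P is characterized as follows: at every box of the triangular shape, if pipe i of P arrives at that box horizontally (from the west) and pipe j of P arrives vertically (from the south), then the box is a crossing of P if and only if i < j, ω⁻¹(i) > ω⁻¹(j), and moreover either π⁻¹(i) > π⁻¹(j) or the box lies in column ω⁻¹(j); otherwise the box is an elbow. Consequently P can be computed by sweeping the boxes of the triangular shape in any linear order in which every box precedes all boxes weakly northeast of it, placing at each box a crossing exactly under the above condition. -/
import Mathlib


/-- A pipe dream of size `n` on the triangular shape, with boxes indexed by pairs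
`(r, c)` of a row `r` and a column `c`, both `0`-indexed (rows increase southwards,
columns increase eastwards).  `cross r c = true` means that box `(r, c)` contains a
crossing tile; all other boxes contain elbow tiles.  Crossings are only allowed in
the full boxes of the triangular shape, i.e. those with `r + c + 2 ≤ n` (the boxes
with `r + c + 1 = n` are the half-boxes on the antidiagonal, which are forced
elbows).  The `n` pipes enter horizontally on the left side in rows `0, …, n-1` and
exit vertically on the top side in columns `0, …, n-1`; pipe `k` is the pipe
entering at row `k`.  An elbow tile connects the west edge of its box to the north
edge (the pipe travelling through this elbow passes northwest of the tile) and the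
south edge to the east edge (this pipe passes southeast of the tile); a crossing
tile connects west to east and south to north. -/
structure PipeDream (n : ℕ) where
  cross : ℕ → ℕ → Bool
  inShape : ∀ r c : ℕ, cross r c = true → r + c + 2 ≤ n

namespace PipeDream

variable {n : ℕ}

/-- `(P.pipes r c).1` is the label of the pipe entering box `(r, c)` from the west,
and `(P.pipes r c).2` is the label of the pipe entering box `(r, c)` from the south
(junk value `0` if there is no box below box `(r, c)` in the triangular shape). -/
def pipes (P : PipeDream n) : ℕ → ℕ → ℕ × ℕ
  | r, c =>
    (if hc : c = 0 then r
      else if P.cross r (c - 1) then (pipes P r (c - 1)).1 else (pipes P r (c - 1)).2,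
     if hr : r + c + 2 ≤ n then
        if P.cross (r + 1) c then (pipes P (r + 1) c).2 else (pipes P (r + 1) c).1
      else 0)
  termination_by r c => (n - r) + c
  decreasing_by all_goals omega

/-- The pipe entering box `(r, c)` from the west (travelling eastwards). -/
def west (P : PipeDream n) (r c : ℕ) : ℕ := (pipes P r c).1

/-- The pipe entering box `(r, c)` from the south (travelling northwards). -/
def south (P : PipeDream n) (r c : ℕ) : ℕ := (pipes P r c).2

/-- The pipe exiting on the top side at column `c`. -/
def exitPipe (P : PipeDream n) (c : ℕ) : ℕ :=
  if P.cross 0 c then P.south 0 c else P.west 0 c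

/-- `P` has exit permutation `ω`, i.e. the pipe exiting at column `c` is `ω c`;
equivalently, pipe `k` exits at column `ω⁻¹ k`. -/
def HasExitPerm (P : PipeDream n) (ω : Equiv.Perm (Fin n)) : Prop :=
  ∀ c : Fin n, P.exitPipe c.val = (ω c).val

/-- `P` is reduced: any two of its pipes cross at most once. -/
def Reduced (P : PipeDream n) : Prop :=
  ∀ r c r' c' : ℕ, P.cross r c = true → P.cross r' c' = true → (r, c) ≠ (r', c') →
    ¬ ((P.west r c = P.west r' c' ∧ P.south r c = P.south r' c') ∨
        (P.west r c = P.south r' c' ∧ P.south r c = P.west r' c'))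

/-- The arcs of the contact graph `P♯` of `P`: there is one arc for each elbow
contact of `P` (an elbow tile in a full box of the triangular shape), oriented from
the pipe passing northwest of the contact (the one travelling west-to-north) to the
pipe passing southeast of it (the one travelling south-to-east). -/
def Arc (P : PipeDream n) (i j : ℕ) : Prop :=
  ∃ r c : ℕ, r + c + 2 ≤ n ∧ P.cross r c = false ∧ P.west r c = i ∧ P.south r c = j

/-- `P` is acyclic: its contact graph has no directed cycle. -/
def Acyclic (P : PipeDream n) : Prop := ∀ i : ℕ, ¬ Relation.TransGen P.Arc i i

/-- `i ⪯_P j` : there is a directed path (possibly empty) from `i` to `j` in the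
contact graph of `P`. -/
def Path (P : PipeDream n) (i j : ℕ) : Prop := Relation.ReflTransGen P.Arc i j

/-- `π` is a linear extension of `P` : `π⁻¹ i < π⁻¹ j` for every arc `i → j` of the
contact graph of `P`. -/
def LinExt (P : PipeDream n) (π : Equiv.Perm (Fin n)) : Prop :=
  ∀ i j : Fin n, P.Arc i.val j.val → π⁻¹ i < π⁻¹ j

/-- There is a contact (an elbow tile in a full box) between pipes `i` and `j`
at box `b`. -/
def ContactAt (P : PipeDream n) (i j : ℕ) (b : ℕ × ℕ) : Prop :=
  b.1 + b.2 + 2 ≤ n ∧ P.cross b.1 b.2 = false ∧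
    ((P.west b.1 b.2 = i ∧ P.south b.1 b.2 = j) ∨
      (P.west b.1 b.2 = j ∧ P.south b.1 b.2 = i))

/-- `P'` is obtained from `P` by the flip exchanging the contact at box `b` with the
crossing at box `b'` (a contact and a crossing between the same two pipes). -/
def IsFlip (P P' : PipeDream n) (b b' : ℕ × ℕ) : Prop :=
  b ≠ b' ∧
  P.cross b.1 b.2 = false ∧ P.cross b'.1 b'.2 = true ∧
  P'.cross b.1 b.2 = true ∧ P'.cross b'.1 b'.2 = false ∧
  (∀ r c : ℕ, (r, c) ≠ b → (r, c) ≠ b' → P.cross r c = P'.cross r c) ∧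
  ((P.west b.1 b.2 = P.west b'.1 b'.2 ∧ P.south b.1 b.2 = P.south b'.1 b'.2) ∨
    (P.west b.1 b.2 = P.south b'.1 b'.2 ∧ P.south b.1 b.2 = P.west b'.1 b'.2))

/-- There is an increasing flip from `P` to `P'`: a flip exchanging a contact at a
box `b` weakly southwest of the box `b'` of the corresponding crossing. -/
def IncFlip (P P' : PipeDream n) : Prop :=
  ∃ b b' : ℕ × ℕ, P.IsFlip P' b b' ∧ b'.1 ≤ b.1 ∧ b.2 ≤ b'.2

end PipeDream

namespace PipeDream
variable {n : ℕ} (P : PipeDream n)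


theorem west_zero (r : ℕ) : P.west r 0 = r := by rw [west, pipes]; simp

theorem west_succ (r c : ℕ) :
    P.west r (c+1) = if P.cross r c then P.west r c else P.south r c := by
  rw [west, pipes]; simp [west, south]

theorem south_eq (r c : ℕ) (h : r + c + 2 ≤ n) :
    P.south r c = if P.cross (r+1) c then P.south (r+1) c else P.west (r+1) c := by
  rw [south, pipes]; simp [west, south, h]

theorem cross_out (r c : ℕ) (h : ¬ (r + c + 2 ≤ n)) : P.cross r c = false := by
  by_contra hc
  exact h (P.inShape r c (by simpa using hc))

/-- Pipe labels are `< n` inside the shape. -/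
theorem bound : ∀ m r c, (n - r) + c ≤ m →
    ((r + c + 1 ≤ n → P.west r c < n) ∧ (r + c + 2 ≤ n → P.south r c < n)) := by
  intro m
  induction m with
  | zero =>
    intro r c hm
    constructor
    · intro h
      have hc : c = 0 := by omega
      subst hc; rw [west_zero]; omega
    · intro h; omega
  | succ m ih =>
    intro r c hm
    constructor
    · intro h
      match c with
      | 0 => rw [west_zero]; omega
      | c + 1 =>
        rw [west_succ]
        have h1 := (ih r c (by omega)).1 (by omega)
        have h2 := (ih r c (by omega)).2 (by omega)
        split <;> assumption
    · intro h
      rw [south_eq _ _ _ h]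
      have h1 := (ih (r+1) c (by omega)).1 (by omega)
      split
      · next hcr => exact (ih (r+1) c (by omega)).2 (P.inShape _ _ hcr)
      · exact h1

/-- Climb lemma: the south pipe of a full box `(r,c)` originates as the west pipe of
the first non-crossing box strictly below in column `c`. -/
theorem climb : ∀ m r c, n - r ≤ m → r + c + 2 ≤ n →
    ∃ x, r < x ∧ x + c + 1 ≤ n ∧ P.cross x c = false ∧ P.west x c = P.south r c ∧
      (∀ y, r < y → y < x → P.cross y c = true ∧ P.south y c = P.south r c) := by
  intro m
  induction m with
  | zero => intro r c hm h; omega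
  | succ m ih =>
    intro r c hm h
    rcases hcr : P.cross (r+1) c with _ | _
    · -- elbow below: origin is r+1
      refine ⟨r+1, by omega, by omega, hcr, ?_, by omega⟩
      rw [south_eq _ _ _ h, hcr]; simp
    · -- crossing below: recurse
      have hfull : (r+1) + c + 2 ≤ n := P.inShape _ _ hcr
      have hs : P.south r c = P.south (r+1) c := by
        rw [south_eq _ _ _ h, hcr]; simp
      obtain ⟨x, hx1, hx2, hx3, hx4, hx5⟩ := ih (r+1) c (by omega) hfull
      refine ⟨x, by omega, hx2, hx3, by rw [hx4, hs], ?_⟩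
      intro y hy1 hy2
      rcases Nat.eq_or_lt_of_le (Nat.succ_le_of_lt hy1) with hy | hy
      · have hy' : y = r + 1 := by omega
        subst hy'
        exact ⟨hcr, hs.symm⟩
      · obtain ⟨h5a, h5b⟩ := hx5 y hy hy2
        exact ⟨h5a, by rw [h5b, hs]⟩

/-- Northbound trace: a pipe heading north out of box `(r,c)` either goes straight
to the exit at column `c`, or turns east at the first elbow above. -/
theorem up : ∀ r c v, r + c + 1 ≤ n →
    (v = if P.cross r c then P.south r c else P.west r c) →
    (P.exitPipe c = v ∧ ∀ x, x < r → P.cross x c = true ∧ P.south x c = v)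
    ∨ (∃ y, y < r ∧ P.cross y c = false ∧ P.south y c = v ∧
        ∀ x, y < x → x < r → P.cross x c = true ∧ P.south x c = v) := by
  intro r
  induction r with
  | zero =>
    intro c v h hv
    left
    exact ⟨by rw [exitPipe, hv], by omega⟩
  | succ r ih =>
    intro c v h hv
    have hsv : P.south r c = v := by
      rw [south_eq _ _ _ (by omega), hv]
    rcases hcr : P.cross r c with _ | _
    · -- elbow at (r,c): v turns east here
      right
      exact ⟨r, by omega, hcr, hsv, by omega⟩
    · -- crossing at (r,c): continue climbing
      have hv' : v = if P.cross r c then P.south r c else P.west r c := by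
        rw [hcr]; simp [hsv]
      rcases ih c v (by omega) hv' with ⟨h1, h2⟩ | ⟨y, hy1, hy2, hy3, hy4⟩
      · left
        refine ⟨h1, ?_⟩
        intro x hx
        rcases Nat.lt_succ_iff_lt_or_eq.mp hx with hx | hx
        · exact h2 x hx
        · subst hx; exact ⟨hcr, hsv⟩
      · right
        refine ⟨y, by omega, hy2, hy3, ?_⟩
        intro x hx1 hx2
        rcases Nat.lt_succ_iff_lt_or_eq.mp hx2 with hx | hx
        · exact hy4 x hx1 hx
        · subst hx; exact ⟨hcr, hsv⟩

/-- Exit traces: every pipe inside the shape eventually exits at some column ≥ its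
current column. -/
theorem traces : ∀ m,
    (∀ r c, (n+2)*r + (n - c) ≤ m → r + c + 1 ≤ n →
      ∃ c', c ≤ c' ∧ c' + 1 ≤ n ∧ P.exitPipe c' = P.west r c)
    ∧ (∀ r c, (n+2)*r + (n - c) ≤ m → r + c + 2 ≤ n →
      ∃ c', c ≤ c' ∧ c' + 1 ≤ n ∧ P.exitPipe c' = P.south r c) := by
  intro m
  induction m using Nat.strong_induction_on with
  | _ m ih =>
  constructor
  · intro r c hm h
    rcases hcr : P.cross r c with _ | _
    · -- north-out is west r c
      match r with
      | 0 =>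
        exact ⟨c, le_refl c, by omega, by rw [exitPipe, hcr]; simp⟩
      | r + 1 =>
        have hs : P.south r c = P.west (r+1) c := by
          rw [south_eq _ _ _ (by omega), hcr]; simp
        have hmlt : (n+2)*r + (n - c) < m := by
          have : (n+2)*r + (n+2) = (n+2)*(r+1) := by ring
          omega
        obtain ⟨c', h1, h2, h3⟩ := (ih _ hmlt).2 r c (le_refl _) (by omega)
        exact ⟨c', h1, h2, by rw [h3, hs]⟩
    · -- crossing: continue east
      have hfull := P.inShape _ _ hcr
      have hw : P.west r (c+1) = P.west r c := by rw [west_succ, hcr]; simp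
      have hmlt : (n+2)*r + (n - (c+1)) < m := by omega
      obtain ⟨c', h1, h2, h3⟩ := (ih _ hmlt).1 r (c+1) (le_refl _) (by omega)
      exact ⟨c', by omega, h2, by rw [h3, hw]⟩
  · intro r c hm h
    rcases hcr : P.cross r c with _ | _
    · -- elbow: south pipe turns east
      have hw : P.west r (c+1) = P.south r c := by rw [west_succ, hcr]; simp
      have hmlt : (n+2)*r + (n - (c+1)) < m := by omega
      obtain ⟨c', h1, h2, h3⟩ := (ih _ hmlt).1 r (c+1) (le_refl _) (by omega)
      exact ⟨c', by omega, h2, by rw [h3, hw]⟩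
    · -- crossing: south pipe continues north
      match r with
      | 0 =>
        exact ⟨c, le_refl c, by omega, by rw [exitPipe, hcr]; simp⟩
      | r + 1 =>
        have hs : P.south r c = P.south (r+1) c := by
          rw [south_eq _ _ _ (by omega), hcr]; simp
        have hmlt : (n+2)*r + (n - c) < m := by
          have : (n+2)*r + (n+2) = (n+2)*(r+1) := by ring
          omega
        obtain ⟨c', h1, h2, h3⟩ := (ih _ hmlt).2 r c (le_refl _) (by omega)
        exact ⟨c', h1, h2, by rw [h3, hs]⟩

/-- Pipes `a` and `b` cross at box `(r,c)`. -/
def CrossAt (r c a b : ℕ) : Prop :=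
  P.cross r c = true ∧
    ((P.west r c = a ∧ P.south r c = b) ∨ (P.west r c = b ∧ P.south r c = a))

/-- Pipes `a` and `b` cross at some box with column `< c`. -/
def CB (c a b : ℕ) : Prop := ∃ r' c', c' < c ∧ P.CrossAt r' c' a b

theorem crossAt_symm {r c a b : ℕ} (h : P.CrossAt r c a b) : P.CrossAt r c b a :=
  ⟨h.1, h.2.symm⟩

theorem reduced_eq (hred : P.Reduced) {r1 c1 r2 c2 a b : ℕ}
    (h1 : P.CrossAt r1 c1 a b) (h2 : P.CrossAt r2 c2 a b) : r1 = r2 ∧ c1 = c2 := by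
  by_contra hne
  have hne' : (r1, c1) ≠ (r2, c2) := by
    intro hp
    exact hne ⟨congrArg Prod.fst hp, congrArg Prod.snd hp⟩
  refine hred r1 c1 r2 c2 h1.1 h2.1 hne' ?_
  rcases h1.2 with ⟨ha, hb⟩ | ⟨ha, hb⟩ <;> rcases h2.2 with ⟨ha', hb'⟩ | ⟨ha', hb'⟩
  · exact Or.inl ⟨by rw [ha, ha'], by rw [hb, hb']⟩
  · exact Or.inr ⟨by rw [ha, hb'], by rw [hb, ha']⟩
  · exact Or.inr ⟨by rw [ha, hb'], by rw [hb, ha']⟩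
  · exact Or.inl ⟨by rw [ha, ha'], by rw [hb, hb']⟩

theorem cb_mono {c c' a b : ℕ} (h : c ≤ c') (hcb : P.CB c a b) : P.CB c' a b := by
  obtain ⟨r1, c1, hc1, hca⟩ := hcb
  exact ⟨r1, c1, by omega, hca⟩

/-- Backward order lemma: two west pipes in the same column are in entry order,
unless they have crossed at an earlier column. -/
theorem back : ∀ c ra rb, ra < rb → rb + c + 1 ≤ n →
    P.west ra c < P.west rb c ∨ P.CB c (P.west ra c) (P.west rb c) := by
  intro c
  induction c with
  | zero =>
    intro ra rb h1 h2
    rw [west_zero, west_zero]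
    exact Or.inl h1
  | succ c ih =>
    intro ra rb h1 h2
    -- compute the origin rows at column c
    rcases hcra : P.cross ra c with _ | _ <;> rcases hcrb : P.cross rb c with _ | _
    · -- both elbows
      obtain ⟨ga, hga1, hga2, hga3, hga4, hga5⟩ := P.climb n ra c (by omega) (by omega)
      obtain ⟨gb, hgb1, hgb2, hgb3, hgb4, hgb5⟩ := P.climb n rb c (by omega) (by omega)
      have hwa : P.west ra (c+1) = P.west ga c := by
        rw [west_succ, hcra, hga4]; simp
      have hwb : P.west rb (c+1) = P.west gb c := by
        rw [west_succ, hcrb, hgb4]; simp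
      have hgarb : ga ≤ rb := by
        by_contra hgt
        exact absurd (hga5 rb h1 (by omega)).1 (by rw [hcrb]; simp)
      rcases Nat.eq_or_lt_of_le hgarb with hga | hga
      · subst hga
        rcases ih ga gb hgb1 hgb2 with h | h
        · exact Or.inl (by rw [hwa, hwb]; exact h)
        · exact Or.inr (by rw [hwa, hwb]; exact P.cb_mono (by omega) h)
      · rcases ih ga gb (by omega) hgb2 with h | h
        · exact Or.inl (by rw [hwa, hwb]; exact h)
        · exact Or.inr (by rw [hwa, hwb]; exact P.cb_mono (by omega) h)
    · -- ra elbow, rb crossing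
      obtain ⟨ga, hga1, hga2, hga3, hga4, hga5⟩ := P.climb n ra c (by omega) (by omega)
      have hwa : P.west ra (c+1) = P.west ga c := by
        rw [west_succ, hcra, hga4]; simp
      have hwb : P.west rb (c+1) = P.west rb c := by rw [west_succ, hcrb]; simp
      rcases lt_trichotomy ga rb with hlt | heq | hgt
      · rcases ih ga rb hlt (by omega) with h | h
        · exact Or.inl (by rw [hwa, hwb]; exact h)
        · exact Or.inr (by rw [hwa, hwb]; exact P.cb_mono (by omega) h)
      · subst heq
        rw [hga3] at hcrb; exact absurd hcrb (by simp)
      · -- the two pipes cross at (rb, c)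
        right
        obtain ⟨hc1, hc2⟩ := hga5 rb h1 hgt
        refine ⟨rb, c, by omega, hcrb, Or.inr ⟨?_, ?_⟩⟩
        · rw [hwb]
        · rw [hc2, ← hga4, hwa]
    · -- ra crossing, rb elbow
      obtain ⟨gb, hgb1, hgb2, hgb3, hgb4, hgb5⟩ := P.climb n rb c (by omega) (by omega)
      have hwa : P.west ra (c+1) = P.west ra c := by rw [west_succ, hcra]; simp
      have hwb : P.west rb (c+1) = P.west gb c := by
        rw [west_succ, hcrb, hgb4]; simp
      rcases ih ra gb (by omega) hgb2 with h | h
      · exact Or.inl (by rw [hwa, hwb]; exact h)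
      · exact Or.inr (by rw [hwa, hwb]; exact P.cb_mono (by omega) h)
    · -- both crossings
      have hwa : P.west ra (c+1) = P.west ra c := by rw [west_succ, hcra]; simp
      have hwb : P.west rb (c+1) = P.west rb c := by rw [west_succ, hcrb]; simp
      rcases ih ra rb h1 (by omega) with h | h
      · exact Or.inl (by rw [hwa, hwb]; exact h)
      · exact Or.inr (by rw [hwa, hwb]; exact P.cb_mono (by omega) h)

/-- Forward order lemma. -/
theorem fwd : ∀ m c ra rb, n - c ≤ m → ra < rb → rb + c + 1 ≤ n →
    (∃ r' c', c ≤ c' ∧ P.CrossAt r' c' (P.west ra c) (P.west rb c))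
    ∨ (∃ ca cb, c ≤ ca ∧ ca < cb ∧ cb + 1 ≤ n ∧
        P.exitPipe ca = P.west ra c ∧ P.exitPipe cb = P.west rb c) := by
  intro m
  induction m with
  | zero => intro c ra rb hm h1 h2; omega
  | succ m ih =>
    intro c ra rb hm h1 h2
    rcases hcrb : P.cross rb c with _ | _
    · -- rb not crossing: b climbs
      have hvb : P.west rb c = if P.cross rb c then P.south rb c else P.west rb c := by
        rw [hcrb]; simp
      rcases P.up rb c (P.west rb c) (by omega) hvb with ⟨hex, hall⟩ | ⟨y, hy1, hy2, hy3, hy4⟩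
      · left
        obtain ⟨hca, hsa⟩ := hall ra h1
        exact ⟨ra, c, le_refl c, hca, Or.inl ⟨rfl, hsa⟩⟩
      · have hwb : P.west y (c+1) = P.west rb c := by
          rw [west_succ, hy2, hy3]; simp
        rcases lt_trichotomy y ra with hy | hy | hy
        · left
          obtain ⟨hca, hsa⟩ := hy4 ra hy h1
          exact ⟨ra, c, le_refl c, hca, Or.inl ⟨rfl, hsa⟩⟩
        · -- y = ra: a turns north at (ra, c)
          have hwb' : P.west ra (c+1) = P.west rb c := hy ▸ hwb
          have hcra : P.cross ra c = false := by rw [← hy]; exact hy2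
          have hva : P.west ra c = if P.cross ra c then P.south ra c else P.west ra c := by
            rw [hcra]; simp
          rcases P.up ra c (P.west ra c) (by omega) hva with ⟨hex, _⟩ | ⟨y', hy'1, hy'2, hy'3, _⟩
          · right
            obtain ⟨cb', hc1, hc2, hc3⟩ := (P.traces ((n+2)*ra + n)).1 ra (c+1)
              (by omega) (by omega)
            exact ⟨c, cb', le_refl c, by omega, hc2, hex, by rw [hc3, hwb']⟩
          · have hwa : P.west y' (c+1) = P.west ra c := by
              rw [west_succ, hy'2, hy'3]; simp
            rcases ih (c+1) y' ra (by omega) hy'1 (by omega) with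
              ⟨r', c', hc', hca⟩ | ⟨ca, cb', hc0, hc1, hc2, hc3, hc4⟩
            · left
              rw [hwa, hwb'] at hca
              exact ⟨r', c', by omega, hca⟩
            · right
              rw [hwa] at hc3
              rw [hwb'] at hc4
              exact ⟨ca, cb', by omega, hc1, hc2, hc3, hc4⟩
        · -- y > ra
          rcases hcra : P.cross ra c with _ | _
          · have hva : P.west ra c = if P.cross ra c then P.south ra c else P.west ra c := by
              rw [hcra]; simp
            rcases P.up ra c (P.west ra c) (by omega) hva with ⟨hex, _⟩ | ⟨y', hy'1, hy'2, hy'3, _⟩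
            · right
              obtain ⟨cb', hc1, hc2, hc3⟩ := (P.traces ((n+2)*y + n)).1 y (c+1)
                (by omega) (by omega)
              exact ⟨c, cb', le_refl c, by omega, hc2, hex, by rw [hc3, hwb]⟩
            · have hwa : P.west y' (c+1) = P.west ra c := by
                rw [west_succ, hy'2, hy'3]; simp
              rcases ih (c+1) y' y (by omega) (by omega) (by omega) with
                ⟨r', c', hc', hca⟩ | ⟨ca, cb', hc0, hc1, hc2, hc3, hc4⟩
              · left
                rw [hwa, hwb] at hca
                exact ⟨r', c', by omega, hca⟩
              · right
                rw [hwa] at hc3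
                rw [hwb] at hc4
                exact ⟨ca, cb', by omega, hc1, hc2, hc3, hc4⟩
          · have hwa : P.west ra (c+1) = P.west ra c := by rw [west_succ, hcra]; simp
            rcases ih (c+1) ra y (by omega) hy (by omega) with
              ⟨r', c', hc', hca⟩ | ⟨ca, cb', hc0, hc1, hc2, hc3, hc4⟩
            · left
              rw [hwa, hwb] at hca
              exact ⟨r', c', by omega, hca⟩
            · right
              rw [hwa] at hc3
              rw [hwb] at hc4
              exact ⟨ca, cb', by omega, hc1, hc2, hc3, hc4⟩
    · -- rb crossing: b continues east
      have hfullb := P.inShape _ _ hcrb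
      have hwb : P.west rb (c+1) = P.west rb c := by rw [west_succ, hcrb]; simp
      rcases hcra : P.cross ra c with _ | _
      · have hva : P.west ra c = if P.cross ra c then P.south ra c else P.west ra c := by
          rw [hcra]; simp
        rcases P.up ra c (P.west ra c) (by omega) hva with ⟨hex, _⟩ | ⟨y', hy'1, hy'2, hy'3, _⟩
        · right
          obtain ⟨cb', hc1, hc2, hc3⟩ := (P.traces ((n+2)*rb + n)).1 rb (c+1)
            (by omega) (by omega)
          exact ⟨c, cb', le_refl c, by omega, hc2, hex, by rw [hc3, hwb]⟩
        · have hwa : P.west y' (c+1) = P.west ra c := by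
            rw [west_succ, hy'2, hy'3]; simp
          rcases ih (c+1) y' rb (by omega) (by omega) (by omega) with
            ⟨r', c', hc', hca⟩ | ⟨ca, cb', hc0, hc1, hc2, hc3, hc4⟩
          · left
            rw [hwa, hwb] at hca
            exact ⟨r', c', by omega, hca⟩
          · right
            rw [hwa] at hc3
            rw [hwb] at hc4
            exact ⟨ca, cb', by omega, hc1, hc2, hc3, hc4⟩
      · have hwa : P.west ra (c+1) = P.west ra c := by rw [west_succ, hcra]; simp
        rcases ih (c+1) ra rb (by omega) h1 (by omega) with
          ⟨r', c', hc', hca⟩ | ⟨ca, cb', hc0, hc1, hc2, hc3, hc4⟩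
        · left
          rw [hwa, hwb] at hca
          exact ⟨r', c', by omega, hca⟩
        · right
          rw [hwa] at hc3
          rw [hwb] at hc4
          exact ⟨ca, cb', by omega, hc1, hc2, hc3, hc4⟩

/-- Chain lemma: from a non-crossing box `(x,c)` with `x < rb`, there is a contact
path from `west x c` to `west rb c`, assuming the induction hypothesis for column
`c+1`. -/
theorem chain (hred : P.Reduced) (c : ℕ)
    (IH : ∀ ra rb, ra < rb → rb + (c+1) + 1 ≤ n →
      P.CB (c+1) (P.west ra (c+1)) (P.west rb (c+1)) →
      Relation.TransGen P.Arc (P.west ra (c+1)) (P.west rb (c+1))) :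
    ∀ m x rb, rb - x ≤ m → x < rb → rb + c + 1 ≤ n → P.cross x c = false →
      Relation.TransGen P.Arc (P.west x c) (P.west rb c) := by
  intro m
  induction m with
  | zero => intro x rb hm h1 h2 h3; omega
  | succ m ih =>
    intro x rb hm h1 h2 hx
    -- the arc out of (x, c)
    have harc : P.Arc (P.west x c) (P.south x c) := ⟨x, c, by omega, hx, rfl, rfl⟩
    obtain ⟨x', hx'1, hx'2, hx'3, hx'4, hx'5⟩ := P.climb n x c (by omega) (by omega)
    rcases lt_trichotomy x' rb with hlt | heq | hgt
    · -- continue the chain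
      have := ih x' rb (by omega) hlt h2 hx'3
      rw [hx'4] at this
      exact Relation.TransGen.head harc this
    · -- chain ends exactly at rb
      subst heq
      rw [hx'4]
      exact Relation.TransGen.single harc
    · -- chain pipe crossed b at (rb, c)
      obtain ⟨hcrb, hsrb⟩ := hx'5 rb h1 hgt
      have hfullb := P.inShape _ _ hcrb
      have hwx : P.west x (c+1) = P.south x c := by rw [west_succ, hx]; simp
      have hwb : P.west rb (c+1) = P.west rb c := by rw [west_succ, hcrb]; simp
      have hcb : P.CB (c+1) (P.west x (c+1)) (P.west rb (c+1)) := by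
        refine ⟨rb, c, by omega, hcrb, Or.inr ⟨?_, ?_⟩⟩
        · rw [hwb]
        · rw [hsrb, hwx]
      have := IH x rb h1 (by omega) hcb
      rw [hwx, hwb] at this
      exact Relation.TransGen.head harc this

/-- Key structural lemma: if two west pipes of the same column have already
crossed at an earlier column, then there is a contact path from the upper
to the lower one. -/
theorem wstar (hred : P.Reduced) : ∀ m c ra rb, n - c ≤ m → ra < rb → rb + c + 1 ≤ n →
    P.CB c (P.west ra c) (P.west rb c) →
    Relation.TransGen P.Arc (P.west ra c) (P.west rb c) := by
  intro m
  induction m with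
  | zero => intro c ra rb hm h1 h2 hcb; omega
  | succ m ih =>
    intro c ra rb hm h1 h2 hcb
    have IH : ∀ ra' rb', ra' < rb' → rb' + (c+1) + 1 ≤ n →
        P.CB (c+1) (P.west ra' (c+1)) (P.west rb' (c+1)) →
        Relation.TransGen P.Arc (P.west ra' (c+1)) (P.west rb' (c+1)) := by
      intro ra' rb' u1 u2 u3
      exact ih (c+1) ra' rb' (by omega) u1 (by omega) u3
    rcases hcra : P.cross ra c with _ | _
    · -- elbow at (ra, c): arc a → z
      have harc : P.Arc (P.west ra c) (P.south ra c) := ⟨ra, c, by omega, hcra, rfl, rfl⟩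
      obtain ⟨x', hx'1, hx'2, hx'3, hx'4, hx'5⟩ := P.climb n ra c (by omega) (by omega)
      rcases lt_trichotomy x' rb with hlt | heq | hgt
      · -- chain through the column
        have := P.chain hred c IH (rb - x') x' rb (le_refl _) hlt h2 hx'3
        rw [hx'4] at this
        exact Relation.TransGen.head harc this
      · subst heq
        rw [hx'4]
        exact Relation.TransGen.single harc
      · -- z crossed b at (rb, c)
        obtain ⟨hcrb, hsrb⟩ := hx'5 rb h1 hgt
        have hfullb := P.inShape _ _ hcrb
        have hwa : P.west ra (c+1) = P.south ra c := by rw [west_succ, hcra]; simp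
        have hwb : P.west rb (c+1) = P.west rb c := by rw [west_succ, hcrb]; simp
        have hcb' : P.CB (c+1) (P.west ra (c+1)) (P.west rb (c+1)) := by
          refine ⟨rb, c, by omega, hcrb, Or.inr ⟨?_, ?_⟩⟩
          · rw [hwb]
          · rw [hsrb, hwa]
        have := IH ra rb h1 (by omega) hcb'
        rw [hwa, hwb] at this
        exact Relation.TransGen.head harc this
    · -- crossing at (ra, c): a continues east
      have hwa : P.west ra (c+1) = P.west ra c := by rw [west_succ, hcra]; simp
      rcases hcrb : P.cross rb c with _ | _
      · -- b climbs
        have hvb : P.west rb c = if P.cross rb c then P.south rb c else P.west rb c := by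
          rw [hcrb]; simp
        rcases P.up rb c (P.west rb c) (by omega) hvb with ⟨hex, hall⟩ | ⟨y, hy1, hy2, hy3, hy4⟩
        · -- b would cross a at (ra, c): second crossing, contradiction
          exfalso
          obtain ⟨hca, hsa⟩ := hall ra h1
          obtain ⟨r0, c0, hc0, hca0⟩ := hcb
          have := P.reduced_eq hred hca0 ⟨hca, Or.inl ⟨rfl, hsa⟩⟩
          omega
        · rcases lt_trichotomy y ra with hy | hy | hy
          · -- climb passed (ra, c): second crossing
            exfalso
            obtain ⟨hca, hsa⟩ := hy4 ra hy h1
            obtain ⟨r0, c0, hc0, hca0⟩ := hcb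
            have := P.reduced_eq hred hca0 ⟨hca, Or.inl ⟨rfl, hsa⟩⟩
            omega
          · exfalso
            rw [← hy] at hcra
            rw [hcra] at hy2
            exact absurd hy2 (by simp)
          · -- b turns east at (y, c) with y > ra
            have hwb : P.west y (c+1) = P.west rb c := by
              rw [west_succ, hy2, hy3]; simp
            have hcb' : P.CB (c+1) (P.west ra (c+1)) (P.west y (c+1)) := by
              rw [hwa, hwb]
              exact P.cb_mono (by omega) hcb
            have := IH ra y hy (by omega) hcb'
            rw [hwa, hwb] at this
            exact this
      · -- both continue east
        have hfullb := P.inShape _ _ hcrb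
        have hwb : P.west rb (c+1) = P.west rb c := by rw [west_succ, hcrb]; simp
        have hcb' : P.CB (c+1) (P.west ra (c+1)) (P.west rb (c+1)) := by
          rw [hwa, hwb]
          exact P.cb_mono (by omega) hcb
        have := IH ra rb h1 (by omega) hcb'
        rw [hwa, hwb] at this
        exact this


theorem arc_bound {a b : ℕ} (h : P.Arc a b) : a < n ∧ b < n := by
  obtain ⟨r, c, hf, _, hw, hs⟩ := h
  have h1 := (P.bound ((n-r)+c) r c (le_refl _)).1 (by omega)
  have h2 := (P.bound ((n-r)+c) r c (le_refl _)).2 hf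
  rw [hw] at h1; rw [hs] at h2; exact ⟨h1, h2⟩

theorem lift {π : Equiv.Perm (Fin n)} (hlin : P.LinExt π) {a b : ℕ}
    (h : Relation.TransGen P.Arc a b) :
    ∀ (ha : a < n) (hb : b < n), π⁻¹ ⟨a, ha⟩ < π⁻¹ ⟨b, hb⟩ := by
  induction h with
  | single h' => intro ha hb; exact hlin ⟨a, ha⟩ ⟨_, hb⟩ h'
  | tail h' harc ih =>
      intro ha hb
      have hb' := (P.arc_bound harc).1
      exact lt_trans (ih ha hb') (hlin ⟨_, hb'⟩ ⟨_, hb⟩ harc)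

theorem exit_col {ω : Equiv.Perm (Fin n)} (hexit : P.HasExitPerm ω) {c : ℕ}
    (hc : c + 1 ≤ n) {x : Fin n} (h : P.exitPipe c = x.val) :
    ω⁻¹ x = ⟨c, by omega⟩ := by
  have h2 := hexit ⟨c, by omega⟩
  rw [h] at h2
  have hx : ω ⟨c, by omega⟩ = x := Fin.ext h2.symm
  rw [Equiv.Perm.inv_def, Equiv.symm_apply_eq]
  exact hx.symm

end PipeDream

/-- The weak order on permutations of `Fin n` : `π ≤ σ` if and only if
`Inv(π) ⊆ Inv(σ)`, where `Inv(π)` is the set of pairs `(i, j)` with `i < j` and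
`π⁻¹ i > π⁻¹ j`. -/
def WeakLE {n : ℕ} (π σ : Equiv.Perm (Fin n)) : Prop :=
  ∀ i j : Fin n, i < j → π⁻¹ j < π⁻¹ i → σ⁻¹ j < σ⁻¹ i

/-- Let `π ≤ ω` in the weak order, and let `P` be the (unique)
acyclic pipe dream of `Π(ω)` having `π` as a linear extension.  Then `P` is
characterized as follows: at every (full) box of the triangular shape, if pipe `i`
of `P` arrives at that box horizontally (from the west) and pipe `j` of `P` arrives
vertically (from the south), then the box is a crossing of `P` if and only if
`i < j`, `ω⁻¹ i > ω⁻¹ j`, and moreover either `π⁻¹ i > π⁻¹ j` or the box lies in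
column `ω⁻¹ j`; otherwise the box is an elbow.  (Consequently `P` can be computed
by sweeping the boxes of the triangular shape in any northeast compatible order,
placing a crossing exactly under this condition.) -/
theorem sweeping_characterization (n : ℕ) (ω π : Equiv.Perm (Fin n))
    (h : WeakLE π ω) (P : PipeDream n)
    (hred : P.Reduced) (hexit : P.HasExitPerm ω) (hacyclic : P.Acyclic)
    (hlin : P.LinExt π) :
    ∀ (r c : ℕ) (i j : Fin n), r + c + 2 ≤ n →
      P.west r c = i.val → P.south r c = j.val →
      (P.cross r c = true ↔
        (i < j ∧ ω⁻¹ j < ω⁻¹ i ∧ (π⁻¹ j < π⁻¹ i ∨ c = (ω⁻¹ j).val))) := by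
  intro r c i j hfull hwi hsj
  constructor
  · intro hcross
    have hCur : P.CrossAt r c i.val j.val := ⟨hcross, Or.inl ⟨hwi, hsj⟩⟩
    -- part 1 : i < j
    obtain ⟨x₀, hx1, hx2, hx3, hx4, hx5⟩ := P.climb n r c (by omega) hfull
    have h1 : i < j := by
      rcases P.back c r x₀ hx1 hx2 with hlt | hcb
      · rw [hwi, hx4, hsj] at hlt
        exact Fin.lt_def.mpr hlt
      · exfalso
        obtain ⟨r0, c0, hc0, hca0⟩ := hcb
        rw [hwi, hx4, hsj] at hca0
        have := P.reduced_eq hred hca0 hCur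
        omega
    have hvj : (j.val : ℕ) = if P.cross r c then P.south r c else P.west r c := by
      rw [hcross]; simp [hsj]
    have hiw : P.west r (c+1) = i.val := by rw [P.west_succ, hcross]; simp [hwi]
    rcases P.up r c j.val (by omega) hvj with ⟨hex, _⟩ | ⟨y, hy1, hy2, hy3, _⟩
    · -- j exits straight north at column c
      have hwj : ω⁻¹ j = ⟨c, by omega⟩ := P.exit_col hexit (by omega) hex
      obtain ⟨c', hc'1, hc'2, hc'3⟩ := (P.traces ((n+2)*r + n)).1 r (c+1) (by omega) (by omega)
      rw [hiw] at hc'3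
      have hwi' : ω⁻¹ i = ⟨c', by omega⟩ := P.exit_col hexit hc'2 hc'3
      refine ⟨h1, ?_, Or.inr (by rw [hwj])⟩
      rw [hwj, hwi']
      exact Fin.mk_lt_mk.mpr (by omega)
    · -- j turns east at (y, c)
      have hjw : P.west y (c+1) = j.val := by rw [P.west_succ, hy2, hy3]; simp
      have h2 : ω⁻¹ j < ω⁻¹ i := by
        rcases P.fwd n (c+1) y r (by omega) hy1 (by omega) with
          ⟨r', c', hc', hca⟩ | ⟨ca, cb, hc0, hc1, hc2, hc3, hc4⟩
        · exfalso
          rw [hjw, hiw] at hca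
          have := P.reduced_eq hred (P.crossAt_symm hca) hCur
          omega
        · rw [hjw] at hc3; rw [hiw] at hc4
          have hwj := P.exit_col hexit (by omega) hc3
          have hwi' := P.exit_col hexit hc2 hc4
          rw [hwj, hwi']
          exact Fin.mk_lt_mk.mpr hc1
      refine ⟨h1, h2, Or.inl ?_⟩
      have hcb : P.CB (c+1) (P.west y (c+1)) (P.west r (c+1)) := by
        refine ⟨r, c, by omega, hcross, Or.inr ⟨?_, ?_⟩⟩
        · rw [hiw, hwi]
        · rw [hjw, hsj]
      have hpath := P.wstar hred n (c+1) y r (by omega) hy1 (by omega) hcb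
      rw [hjw, hiw] at hpath
      have := P.lift hlin hpath j.isLt i.isLt
      simpa using this
  · rintro ⟨h1, h2, h3⟩
    by_contra hcr
    have hcr' : P.cross r c = false := by
      cases hc : P.cross r c
      · rfl
      · exact absurd hc hcr
    have harc : P.Arc i.val j.val := ⟨r, c, hfull, hcr', hwi, hsj⟩
    rcases h3 with h3 | h3
    · exact lt_asymm h3 (hlin i j harc)
    · -- elbow sends j east, contradicting that j exits at column c
      have hjw : P.west r (c+1) = j.val := by rw [P.west_succ, hcr']; simp [hsj]
      obtain ⟨c', hc'1, hc'2, hc'3⟩ := (P.traces ((n+2)*r + n)).1 r (c+1) (by omega) (by omega)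
      rw [hjw] at hc'3
      have hwj := P.exit_col hexit hc'2 hc'3
      rw [hwj] at h3
      simp only [] at h3
      omega
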